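/- arXiv:2503.08522 — 3 statements merged into one kernel-verified Lean document; each statement's English description precedes it below -/
import Mathlib

section
/- For all real numbers a ≥ b ≥ 0 and any ν ∈ (0,1], one has (a − b)^ν ≤ 2^{1−ν}·a^ν − b^ν. -/
/-! Concavity of `t ↦ t ^ ν` at the midpoint of `a - b` and `b` gives
`(a - b) ^ ν + b ^ ν ≤ 2 * (a / 2) ^ ν = 2 ^ (1 - ν) * a ^ ν`. -/

namespace Real

lemma rpow_add_rpow_le_two_rpow_mul_rpow_add {x y p : ℝ} (hx : 0 ≤ x) (hy : 0 ≤ y)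
    (hp₀ : 0 ≤ p) (hp₁ : p ≤ 1) :
    x ^ p + y ^ p ≤ 2 ^ (1 - p) * (x + y) ^ p := by
  have hmid : (1 / 2 : ℝ) • x ^ p + (1 / 2 : ℝ) • y ^ p ≤ ((1 / 2 : ℝ) • x + (1 / 2 : ℝ) • y) ^ p :=
    (concaveOn_rpow hp₀ hp₁).2 hx hy (by norm_num) (by norm_num) (by norm_num)
  have hhalf : ((1 / 2 : ℝ) • x + (1 / 2 : ℝ) • y) ^ p = 2 ^ (-p) * (x + y) ^ p := by
    rw [smul_eq_mul, smul_eq_mul, ← mul_add, mul_rpow (by norm_num) (by positivity), one_div,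
      inv_rpow zero_le_two, rpow_neg zero_le_two]
  have htwo : (2 : ℝ) ^ (1 - p) = 2 * 2 ^ (-p) := by
    rw [sub_eq_add_neg, rpow_add zero_lt_two, rpow_one]
  rw [hhalf, smul_eq_mul, smul_eq_mul] at hmid
  rw [htwo]
  linarith

end Real

theorem rpow_sub_le (a b ν : ℝ) (hb : 0 ≤ b) (hab : b ≤ a)
    (hν0 : 0 < ν) (hν1 : ν ≤ 1) :
    (a - b) ^ ν ≤ 2 ^ (1 - ν) * a ^ ν - b ^ ν := by
  have h := Real.rpow_add_rpow_le_two_rpow_mul_rpow_add (sub_nonneg.2 hab) hb hν0.le hν1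
  rw [sub_add_cancel] at h
  linarith
end

section
/- Let q ∈ (1,2], ρ > 0, and define for C¹ functions f: ℝⁿ → ℝ and F: ℝⁿ → ℝ^m the convex model P̄(y;x) = f(x) + ⟨∇f(x), y−x⟩ + (ρ/q)‖F(x)+J_F(x)(y−x)‖_q^q and, for β > 0 and 0 < r ≤ 1, the quantities Ψ̄(x, β) = P̄(x;x) − min_{y ∈ ℝⁿ}{P̄(y;x) + (β/2)‖y−x‖²} and Ψ_r(x) = P̄(x;x) − min_{‖y−x‖≤r} P̄(y;x). Then Ψ̄(x, β) ≥ (1/2)·min(1, Ψ_r(x)/(β r²))·Ψ_r(x). -/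
/-! Since `q > 1`, the model `P̄(·; x)` is convex. Let `s` minimise it over the ball of radius `r`
around `x`, so that `Ψ_r(x) = P̄(x;x) - P̄(s;x)`, and put `θ = min 1 (Ψ_r(x) / (β r²))`.
By convexity the point `y = x + θ (s - x)` decreases the model by at least `θ Ψ_r(x)`, while its
proximal penalty is at most `β θ² r² / 2 ≤ θ Ψ_r(x) / 2`. -/

open Set

theorem convexOn_abs_rpow {q : ℝ} (hq : 1 ≤ q) : ConvexOn ℝ univ fun t : ℝ => |t| ^ q := by
  refine ⟨convex_univ, fun s _ t _ a b ha hb hab => ?_⟩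
  have h_abs : |a • s + b • t| ≤ a * |s| + b * |t| := by
    simpa [abs_mul, abs_of_nonneg ha, abs_of_nonneg hb] using abs_add_le (a * s) (b * t)
  calc |a • s + b • t| ^ q ≤ (a * |s| + b * |t|) ^ q :=
        Real.rpow_le_rpow (abs_nonneg _) h_abs (by linarith)
    _ ≤ a • |s| ^ q + b • |t| ^ q :=
        (convexOn_rpow hq).2 (abs_nonneg s) (abs_nonneg t) ha hb hab

theorem ConvexOn.finset_sum {𝕜 E β ι : Type*} [Semiring 𝕜] [PartialOrder 𝕜] [AddCommMonoid E]
    [AddCommMonoid β] [PartialOrder β] [IsOrderedAddMonoid β] [SMul 𝕜 E] [Module 𝕜 β]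
    {s : Set E} (hs : Convex 𝕜 s) (t : Finset ι) {f : ι → E → β}
    (hf : ∀ i ∈ t, ConvexOn 𝕜 s (f i)) : ConvexOn 𝕜 s fun y => ∑ i ∈ t, f i y := by
  classical
  induction t using Finset.induction_on with
  | empty => simpa using convexOn_const (0 : β) hs
  | insert i t hi ih =>
    simp only [Finset.sum_insert hi]
    exact (hf i (t.mem_insert_self i)).add (ih fun j hj => hf j (Finset.mem_insert_of_mem hj))

section Model

variable {E : Type*} [NormedAddCommGroup E] [InnerProductSpace ℝ E]

noncomputable def affineModel (a : ℝ) (g x : E) : E →ᵃ[ℝ] ℝ :=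
  AffineMap.const ℝ E a + (innerₛₗ ℝ g).toAffineMap.comp (AffineMap.id ℝ E - AffineMap.const ℝ E x)

@[simp]
theorem coe_affineModel (a : ℝ) (g x : E) :
    ⇑(affineModel a g x) = fun y => a + inner ℝ g (y - x) := by
  ext y
  simp [affineModel]

theorem convexOn_linearizedModel {q κ : ℝ} {ι : Type*} (t : Finset ι) (hq : 1 ≤ q) (hκ : 0 ≤ κ)
    (c : ℝ) (g₀ x : E) (a : ι → ℝ) (g : ι → E) :
    ConvexOn ℝ univ fun y =>
      c + inner ℝ g₀ (y - x) + κ * ∑ i ∈ t, |a i + inner ℝ (g i) (y - x)| ^ q := by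
  have h_lin : ConvexOn ℝ univ fun y => c + inner ℝ g₀ (y - x) := by
    simpa [Function.comp_def] using (convexOn_id convex_univ).comp_affineMap (affineModel c g₀ x)
  have h_pow (i : ι) : ConvexOn ℝ univ fun y => |a i + inner ℝ (g i) (y - x)| ^ q := by
    simpa [Function.comp_def] using
      (convexOn_abs_rpow hq).comp_affineMap (affineModel (a i) (g i) x)
  exact h_lin.add ((ConvexOn.finset_sum convex_univ t fun i _ => h_pow i).smul hκ)

theorem bddBelow_range_add_sq_norm_sub {P : E → ℝ} {β c : ℝ} {g x : E} (hβ : 0 < β)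
    (hP : ∀ y, c + inner ℝ g (y - x) ≤ P y) :
    BddBelow (range fun y => P y + β / 2 * ‖y - x‖ ^ 2) := by
  refine ⟨c - ‖g‖ ^ 2 / (2 * β), ?_⟩
  rintro _ ⟨y, rfl⟩
  have h_cs : -(‖g‖ * ‖y - x‖) ≤ inner ℝ g (y - x) := neg_le_of_abs_le (abs_real_inner_le_norm _ _)
  have h_sq : β / 2 * ‖y - x‖ ^ 2 - ‖g‖ * ‖y - x‖ + ‖g‖ ^ 2 / (2 * β) =
      (β * ‖y - x‖ - ‖g‖) ^ 2 / (2 * β) := by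
    field_simp
    ring
  have : 0 ≤ (β * ‖y - x‖ - ‖g‖) ^ 2 / (2 * β) := by positivity
  linarith [hP y]

end Model

theorem ConvexOn.mul_sub_le_sub_segment {E : Type*} [AddCommGroup E] [Module ℝ E] {P : E → ℝ}
    (hP : ConvexOn ℝ univ P) (x s : E) {θ : ℝ} (hθ₀ : 0 ≤ θ) (hθ₁ : θ ≤ 1) :
    θ * (P x - P s) ≤ P x - P (x + θ • (s - x)) := by
  have h := hP.2 (mem_univ x) (mem_univ s) (sub_nonneg.2 hθ₁) hθ₀ (by ring)
  have h_pt : (1 - θ) • x + θ • s = x + θ • (s - x) := by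
    rw [smul_sub, sub_smul, one_smul]
    abel
  rw [h_pt, smul_eq_mul, smul_eq_mul] at h
  linarith

theorem half_min_mul_le_min_mul_sub {Ψ c : ℝ} (hΨ : 0 ≤ Ψ) (hc : 0 ≤ c) :
    1 / 2 * min 1 (Ψ / c) * Ψ ≤ min 1 (Ψ / c) * Ψ - c / 2 * min 1 (Ψ / c) ^ 2 := by
  set θ := min 1 (Ψ / c)
  have hθ₀ : 0 ≤ θ := le_min zero_le_one (by positivity)
  have hθc : θ * c ≤ Ψ := by
    rcases hc.eq_or_lt with rfl | hc
    · simpa using hΨ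
    · exact (le_div_iff₀ hc).1 (min_le_right _ _)
  nlinarith [mul_le_mul_of_nonneg_left hθc hθ₀]

theorem ConvexOn.mul_sub_le_sub_sInf_add_sq_norm {E : Type*} [NormedAddCommGroup E]
    [NormedSpace ℝ E] {P : E → ℝ} (hP : ConvexOn ℝ univ P) {β r : ℝ} (hβ : 0 ≤ β) {x s : E}
    (hs : ‖s - x‖ ≤ r) (hPs : P s ≤ P x)
    (hbdd : BddBelow (range fun y => P y + β / 2 * ‖y - x‖ ^ 2)) :
    1 / 2 * min 1 ((P x - P s) / (β * r ^ 2)) * (P x - P s) ≤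
      P x - sInf (range fun y => P y + β / 2 * ‖y - x‖ ^ 2) := by
  set θ := min 1 ((P x - P s) / (β * r ^ 2))
  have hθ₀ : 0 ≤ θ := le_min zero_le_one (div_nonneg (sub_nonneg.2 hPs) (by positivity))
  set y := x + θ • (s - x)
  have h_descent := hP.mul_sub_le_sub_segment x s hθ₀ (min_le_left _ _)
  have h_dist : ‖y - x‖ ^ 2 ≤ θ ^ 2 * r ^ 2 := by
    have : ‖y - x‖ ≤ θ * r := by
      simpa [y, norm_smul, abs_of_nonneg hθ₀] using mul_le_mul_of_nonneg_left hs hθ₀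
    nlinarith [norm_nonneg (y - x)]
  have h_inf := csInf_le hbdd ⟨y, rfl⟩
  have h_scalar := half_min_mul_le_min_mul_sub (sub_nonneg.2 hPs) (by positivity : 0 ≤ β * r ^ 2)
  nlinarith [mul_le_mul_of_nonneg_left h_dist hβ]

theorem pseudo_criticality_lower_bound_general (n m : ℕ) (q ρ r β : ℝ)
    (hq1 : 1 < q) (hρ : 0 < ρ) (hr0 : 0 < r) (hβ : 0 < β)
    (f : EuclideanSpace ℝ (Fin n) → ℝ) (F : EuclideanSpace ℝ (Fin n) → Fin m → ℝ)
    (gf : EuclideanSpace ℝ (Fin n) → EuclideanSpace ℝ (Fin n))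
    (gF : EuclideanSpace ℝ (Fin n) → Fin m → EuclideanSpace ℝ (Fin n))
    (Pbar : EuclideanSpace ℝ (Fin n) → EuclideanSpace ℝ (Fin n) → ℝ)
    (hPbar : ∀ x y, Pbar x y =
      f x + (inner ℝ (gf x) (y - x) : ℝ) +
        (ρ / q) * ∑ i, |F x i + (inner ℝ (gF x i) (y - x) : ℝ)| ^ q)
    (x : EuclideanSpace ℝ (Fin n)) :
    Pbar x x - sInf (Set.range fun y => Pbar x y + (β / 2) * ‖y - x‖ ^ 2) ≥
      (1 / 2) *
        min 1 ((Pbar x x - sInf (Pbar x '' Metric.closedBall x r)) / (β * r ^ 2)) *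
        (Pbar x x - sInf (Pbar x '' Metric.closedBall x r)) := by
  have hρq : 0 ≤ ρ / q := by positivity
  have h_convex : ConvexOn ℝ univ (Pbar x) := by
    rw [funext (hPbar x)]
    exact convexOn_linearizedModel _ hq1.le hρq _ _ _ _ _
  have hx : x ∈ Metric.closedBall x r := Metric.mem_closedBall_self hr0.le
  obtain ⟨s, hs, h_inf, h_min⟩ := (isCompact_closedBall x r).exists_sInf_image_eq_and_le ⟨x, hx⟩
    ((h_convex.continuousOn isOpen_univ).mono (subset_univ _))
  have h_bdd : BddBelow (range fun y => Pbar x y + β / 2 * ‖y - x‖ ^ 2) := by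
    refine bddBelow_range_add_sq_norm_sub (c := f x) (g := gf x) hβ fun y => ?_
    rw [hPbar x y, le_add_iff_nonneg_right]
    exact mul_nonneg hρq (Finset.sum_nonneg fun i _ => Real.rpow_nonneg (abs_nonneg _) q)
  rw [h_inf]
  exact h_convex.mul_sub_le_sub_sInf_add_sq_norm hβ.le (mem_closedBall_iff_norm.1 hs) (h_min x hx)
    h_bdd

theorem pseudo_criticality_lower_bound (n m : ℕ) (q ρ r β : ℝ)
    (hq1 : 1 < q) (hq2 : q ≤ 2) (hρ : 0 < ρ) (hr0 : 0 < r) (hr1 : r ≤ 1) (hβ : 0 < β)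
    (f : EuclideanSpace ℝ (Fin n) → ℝ) (F : EuclideanSpace ℝ (Fin n) → Fin m → ℝ)
    (gf : EuclideanSpace ℝ (Fin n) → EuclideanSpace ℝ (Fin n))
    (gF : EuclideanSpace ℝ (Fin n) → Fin m → EuclideanSpace ℝ (Fin n))
    (hf : ∀ x, HasGradientAt f (gf x) x)
    (hF : ∀ x i, HasGradientAt (fun y => F y i) (gF x i) x)
    (Pbar : EuclideanSpace ℝ (Fin n) → EuclideanSpace ℝ (Fin n) → ℝ)
    (hPbar : ∀ x y, Pbar x y =
      f x + (inner ℝ (gf x) (y - x) : ℝ) +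
        (ρ / q) * ∑ i, |F x i + (inner ℝ (gF x i) (y - x) : ℝ)| ^ q)
    (x : EuclideanSpace ℝ (Fin n)) :
    Pbar x x - sInf (Set.range fun y => Pbar x y + (β / 2) * ‖y - x‖ ^ 2) ≥
      (1 / 2) *
        min 1 ((Pbar x x - sInf (Pbar x '' Metric.closedBall x r)) / (β * r ^ 2)) *
        (Pbar x x - sInf (Pbar x '' Metric.closedBall x r)) :=
  pseudo_criticality_lower_bound_general n m q ρ r β hq1 hρ hr0 hβ f F gf gF Pbar hPbar x
end

section
/- Let g: ℝⁿ → ℝ be a convex differentiable function, β > 0, x ∈ ℝⁿ, and let x⁺ = argmin_{y ∈ ℝⁿ} {g(y) + (β/2)‖y−x‖²}. Then g(x⁺) ≤ g(x) − β‖x⁺ − x‖². -/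
theorem prox_step_decrease (n : ℕ) (g : EuclideanSpace ℝ (Fin n) → ℝ)
    (hconv : ConvexOn ℝ Set.univ g) (hdiff : Differentiable ℝ g)
    (β : ℝ) (hβ : 0 < β) (x xplus : EuclideanSpace ℝ (Fin n))
    (hmin : ∀ y, g xplus + (β / 2) * ‖xplus - x‖ ^ 2 ≤ g y + (β / 2) * ‖y - x‖ ^ 2) :
    g xplus ≤ g x - β * ‖xplus - x‖ ^ 2 := by
  set d2 : ℝ := ‖xplus - x‖ ^ 2 with hd2
  have hd2nn : 0 ≤ d2 := by positivity
  -- key inequality for each t ∈ (0,1]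
  have key : ∀ t : ℝ, 0 < t → t ≤ 1 →
      g xplus ≤ g x - (β / 2) * (2 - t) * d2 := by
    intro t ht ht1
    set y : EuclideanSpace ℝ (Fin n) := (1 - t) • xplus + t • x with hy
    have hconvy : g y ≤ (1 - t) * g xplus + t * g x := by
      have := hconv.2 (Set.mem_univ xplus) (Set.mem_univ x)
        (by linarith : (0:ℝ) ≤ 1 - t) (le_of_lt ht) (by ring)
      simpa [hy, smul_eq_mul] using this
    have hyx : y - x = (1 - t) • (xplus - x) := by
      rw [hy]
      module
    have hnorm : ‖y - x‖ ^ 2 = (1 - t) ^ 2 * d2 := by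
      rw [hyx, norm_smul, mul_pow, hd2]
      congr 1
      rw [Real.norm_eq_abs, sq_abs]
    have hm := hmin y
    rw [hnorm] at hm
    have h2 : g xplus + (β / 2) * d2 ≤
        (1 - t) * g xplus + t * g x + (β / 2) * ((1 - t) ^ 2 * d2) := by
      calc g xplus + (β / 2) * d2 ≤ g y + (β / 2) * ((1 - t) ^ 2 * d2) := hm
        _ ≤ (1 - t) * g xplus + t * g x + (β / 2) * ((1 - t) ^ 2 * d2) := by linarith
    -- divide by t
    nlinarith [mul_pos ht ht, sq_nonneg t]
  -- limit as t → 0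
  refine le_of_forall_pos_le_add ?_
  intro ε hε
  have hden : 0 < β * (d2 + 1) := by positivity
  set t : ℝ := min 1 (2 * ε / (β * (d2 + 1))) with htdef
  have ht0 : 0 < t := lt_min one_pos (by positivity)
  have ht1 : t ≤ 1 := min_le_left _ _
  have htle : t ≤ 2 * ε / (β * (d2 + 1)) := min_le_right _ _
  have hk := key t ht0 ht1
  have htβ : t * (β * (d2 + 1)) ≤ 2 * ε := by
    calc t * (β * (d2 + 1)) ≤ (2 * ε / (β * (d2 + 1))) * (β * (d2 + 1)) :=
          mul_le_mul_of_nonneg_right htle (le_of_lt hden)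
      _ = 2 * ε := by field_simp
  -- (β/2) * t * d2 ≤ ε
  nlinarith [mul_pos hβ ht0]
end
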